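/- For every positive integer n and every t ∈ (0, n], the average first moment of the truncated cube satisfies P_n(t) = (1/n)·( t − [Σ_{k=0}^{n} C(n,k)(−1)^k (t−k)^{n+1} 𝟙{t ≥ k}] / (V_n(t)·(n+1)!) ). -/

import Mathlib

/-!
With `s₊ = max s 0`, the first moment splits as
`∫_{𝒯_n(t)} ∑ xᵢ = t·V_n(t) - ∫_{[0,1]^n} (t - ∑ xᵢ)₊`.
The last integral is computed one coordinate at a time: integrating the truncated power
`s₊^m / m!` of `c - u` over `u ∈ [0,1]` gives the backward difference of `s₊^(m+1) / (m+1)!`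
at `c`, so after `n` steps `∫_{[0,1]^n} (t - ∑ xᵢ)₊` is the `n`-th backward difference
`∑ₖ (n choose k) (-1)^k (t - k)₊^(n+1) / (n+1)!`.
-/

open MeasureTheory

/-- The truncated cube `𝒯_n(t) = {x ∈ [0,1]^n : ∑ i, x i ≤ t}`. -/
def truncCube (n : ℕ) (t : ℝ) : Set (Fin n → ℝ) :=
  {x | (∀ i, x i ∈ Set.Icc (0 : ℝ) 1) ∧ ∑ i, x i ≤ t}

/-- Volume of the truncated cube. -/
noncomputable def truncVol (n : ℕ) (t : ℝ) : ℝ :=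
  (volume (truncCube n t)).toReal

/-- Average first moment of the truncated cube. -/
noncomputable def truncMoment (n : ℕ) (t : ℝ) : ℝ :=
  (1 / (n * truncVol n t)) * ∫ x in truncCube n t, ∑ i, x i

open Set Finset
open scoped Nat

noncomputable def truncPow (m : ℕ) (s : ℝ) : ℝ := max s 0 ^ m / m !

theorem continuous_truncPow (m : ℕ) : Continuous (truncPow m) := by
  unfold truncPow; fun_prop

-- The exponent is kept positive: `max v 0 ^ 0 = 1` is not the indicator of `0 ≤ v`.
theorem integral_truncPow (m : ℕ) (x : ℝ) :
    ∫ v in (0 : ℝ)..x, truncPow (m + 1) v = truncPow (m + 2) x := by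
  rcases le_total 0 x with hx | hx
  · have hcongr : EqOn (truncPow (m + 1)) (fun v => v ^ (m + 1) / (m + 1)!) (uIcc 0 x) := by
      intro v hv
      rw [uIcc_of_le hx] at hv
      simp only [truncPow, max_eq_left hv.1]
    rw [intervalIntegral.integral_congr hcongr, intervalIntegral.integral_div, integral_pow,
      truncPow, max_eq_left hx, Nat.factorial_succ (m + 1)]
    push_cast
    field_simp
    simp
  · have hcongr : EqOn (truncPow (m + 1)) 0 (uIcc 0 x) := by
      intro v hv
      rw [uIcc_of_ge hx] at hv
      simp [truncPow, max_eq_right hv.2]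
    rw [intervalIntegral.integral_congr hcongr]
    simp [truncPow, max_eq_right hx]

theorem integral_truncPow_sub (m : ℕ) (c : ℝ) :
    ∫ u in (0 : ℝ)..1, truncPow (m + 1) (c - u) =
      truncPow (m + 2) c - truncPow (m + 2) (c - 1) := by
  have hint (a b : ℝ) : IntervalIntegrable (truncPow (m + 1)) volume a b :=
    (continuous_truncPow _).intervalIntegrable a b
  rw [intervalIntegral.integral_comp_sub_left (truncPow (m + 1)), sub_zero,
    ← intervalIntegral.integral_interval_sub_left (hint 0 c) (hint 0 (c - 1)),
    integral_truncPow, integral_truncPow]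

theorem sum_range_choose_succ_mul_neg_one_pow (n : ℕ) (q : ℕ → ℝ) :
    ∑ k ∈ range (n + 2), ((n + 1).choose k : ℝ) * (-1) ^ k * q k =
      ∑ k ∈ range (n + 1), (n.choose k : ℝ) * (-1) ^ k * (q k - q (k + 1)) := by
  rw [sum_range_succ' _ (n + 1)]
  simp only [Nat.choose_succ_succ, Nat.cast_add, add_mul, sum_add_distrib, mul_sub,
    sum_sub_distrib]
  rw [sum_range_succ (fun k => (n.choose (k + 1) : ℝ) * _ * _), Nat.choose_succ_self,
    sum_range_succ' (fun k => (n.choose k : ℝ) * _ * q k)]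
  simp only [pow_succ, Nat.choose_zero_right, mul_neg, mul_one, neg_mul,
    sum_neg_distrib]
  push_cast
  ring

def unitCube (n : ℕ) : Set (Fin n → ℝ) := univ.pi fun _ => Icc 0 1

theorem isCompact_unitCube (n : ℕ) : IsCompact (unitCube n) :=
  isCompact_univ_pi fun _ => isCompact_Icc

theorem volume_restrict_unitCube (n : ℕ) :
    volume.restrict (unitCube n) = Measure.pi fun _ => volume.restrict (Icc (0 : ℝ) 1) := by
  rw [unitCube, volume_pi, Measure.restrict_pi_pi]

theorem integral_unitCube_succ (n : ℕ) {g : ℝ → ℝ} (hg : Continuous g) :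
    ∫ x in unitCube (n + 1), g (∑ i, x i) =
      ∫ u in Icc 0 1, ∫ y in unitCube n, g (u + ∑ i, y i) := by
  have hint : Integrable (fun p : ℝ × (Fin n → ℝ) => g (p.1 + ∑ i, p.2 i))
      ((volume.restrict (Icc 0 1)).prod (volume.restrict (unitCube n))) := by
    rw [Measure.prod_restrict, ← Measure.volume_eq_prod]
    exact (Continuous.continuousOn (by fun_prop)).integrableOn_compact
      (isCompact_Icc.prod (isCompact_unitCube n))
  rw [← integral_prod _ hint, volume_restrict_unitCube, volume_restrict_unitCube,
    ← (measurePreserving_piFinSuccAbove (fun _ => volume.restrict (Icc (0 : ℝ) 1)) 0).symm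
      |>.integral_comp']
  simp [Fin.sum_univ_succ, MeasurableEquiv.piFinSuccAbove_symm_apply, Fin.insertNthEquiv]

theorem integral_unitCube_truncPow (n p : ℕ) (t : ℝ) :
    ∫ x in unitCube n, truncPow (p + 1) (t - ∑ i, x i) =
      ∑ k ∈ range (n + 1), (n.choose k : ℝ) * (-1) ^ k * truncPow (n + p + 1) (t - k) := by
  induction n generalizing t with
  | zero => simp [volume_restrict_unitCube, measureReal_def]
  | succ n ih =>
    have hstep := integral_unitCube_succ n (g := fun s => truncPow (p + 1) (t - s)) (by
      have := continuous_truncPow (p + 1); fun_prop)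
    have hsummand (k : ℕ) : ∫ u in (0 : ℝ)..1, truncPow (n + p + 1) (t - u - k) =
        truncPow (n + 1 + p + 1) (t - k) - truncPow (n + 1 + p + 1) (t - (k + 1 : ℕ)) := by
      simp_rw [sub_right_comm t _ (k : ℝ)]
      rw [integral_truncPow_sub, Nat.cast_succ, sub_add_eq_sub_sub,
        show n + p + 2 = n + 1 + p + 1 by ring]
    rw [hstep]
    simp_rw [← sub_sub, ih]
    rw [integral_Icc_eq_integral_Ioc, ← intervalIntegral.integral_of_le zero_le_one,
      intervalIntegral.integral_finsetSum fun k _ => Continuous.intervalIntegrable (by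
        have := continuous_truncPow (n + p + 1); fun_prop) 0 1]
    simp_rw [intervalIntegral.integral_const_mul, hsummand]
    exact (sum_range_choose_succ_mul_neg_one_pow n fun k => truncPow (n + 1 + p + 1) (t - k)).symm

theorem max_zero_pow_eq_mul_ite {m : ℕ} (hm : m ≠ 0) (s : ℝ) :
    max s 0 ^ m = s ^ m * if 0 ≤ s then 1 else 0 := by
  rcases le_or_gt 0 s with hs | hs
  · simp [hs]
  · simp [hs.le, hs.not_ge, hm]

theorem truncCube_eq_unitCube_inter (n : ℕ) (t : ℝ) :
    truncCube n t = unitCube n ∩ {x | ∑ i, x i ≤ t} := by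
  ext x
  exact and_congr_left' mem_univ_pi.symm

theorem isCompact_truncCube (n : ℕ) (t : ℝ) : IsCompact (truncCube n t) := by
  rw [truncCube_eq_unitCube_inter]
  exact (isCompact_unitCube n).inter_right (isClosed_le (by fun_prop) continuous_const)

theorem truncVol_pos (n : ℕ) {t : ℝ} (ht : 0 < t) : 0 < truncVol n t := by
  set ε := min (t / (n + 1)) 1
  have hε : 0 < ε := lt_min (by positivity) one_pos
  have hsub : univ.pi (fun _ : Fin n => Icc 0 ε) ⊆ truncCube n t := by
    intro x hx
    rw [mem_univ_pi] at hx
    refine ⟨fun i => ⟨(hx i).1, (hx i).2.trans (min_le_right _ _)⟩, ?_⟩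
    calc ∑ i, x i ≤ ∑ _i : Fin n, t / (n + 1) :=
          sum_le_sum fun i _ => (hx i).2.trans (min_le_left _ _)
      _ = n / (n + 1) * t := by
            rw [sum_const, card_univ, Fintype.card_fin, nsmul_eq_mul]; ring
      _ ≤ 1 * t := by gcongr; rw [div_le_one (by positivity)]; linarith
      _ = t := one_mul t
  have hpos : 0 < volume (univ.pi fun _ : Fin n => Icc 0 ε) := by
    rw [volume_pi_pi]
    simpa using ENNReal.pow_pos (ENNReal.ofReal_pos.2 hε) n
  exact ENNReal.toReal_pos (hpos.trans_le (measure_mono hsub)).ne'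
    (isCompact_truncCube n t).measure_lt_top.ne

theorem setIntegral_truncCube_sum (n : ℕ) (t : ℝ) :
    ∫ x in truncCube n t, ∑ i, x i =
      t * truncVol n t - ∫ x in unitCube n, max (t - ∑ i, x i) 0 := by
  have hsub : truncCube n t ⊆ unitCube n := by
    rw [truncCube_eq_unitCube_inter]; exact inter_subset_left
  have hmeas := (isCompact_truncCube n t).isClosed.measurableSet
  have hposPart : ∫ x in unitCube n, max (t - ∑ i, x i) 0 =
      ∫ x in truncCube n t, (t - ∑ i, x i) := by
    rw [setIntegral_eq_of_subset_of_forall_sdiff_eq_zero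
      (isCompact_unitCube n).isClosed.measurableSet hsub]
    · exact setIntegral_congr_fun hmeas fun x hx => max_eq_left (sub_nonneg.2 hx.2)
    · intro x ⟨hx, hxt⟩
      rw [truncCube_eq_unitCube_inter] at hxt
      exact max_eq_right (sub_nonpos.2 (not_le.1 fun h => hxt ⟨hx, h⟩).le)
  have hconst : IntegrableOn (fun _ => t) (truncCube n t) :=
    integrableOn_const (isCompact_truncCube n t).measure_lt_top.ne
  have hsum : IntegrableOn (fun x : Fin n → ℝ => ∑ i, x i) (truncCube n t) :=
    (Continuous.continuousOn (by fun_prop)).integrableOn_compact (isCompact_truncCube n t)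
  rw [hposPart, integral_sub hconst hsum, setIntegral_const, truncVol, smul_eq_mul,
    measureReal_def]
  ring

theorem truncCube_moment_formula_general (n : ℕ) (t : ℝ)
    (ht : t ∈ Set.Ioc (0 : ℝ) n) :
    truncMoment n t =
      (1 / (n : ℝ)) *
        (t - (∑ k ∈ Finset.range (n + 1),
            (n.choose k : ℝ) * (-1) ^ k * (t - k) ^ (n + 1) *
              (if 0 ≤ t - (k : ℝ) then 1 else 0)) /
          (truncVol n t * ((n + 1).factorial : ℝ))) := by
  have hV := (truncVol_pos n ht.1).ne'
  have hcube : ∫ x in unitCube n, max (t - ∑ i, x i) 0 =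
      (∑ k ∈ range (n + 1), (n.choose k : ℝ) * (-1) ^ k * (t - k) ^ (n + 1) *
        (if 0 ≤ t - (k : ℝ) then 1 else 0)) / (n + 1)! := by
    have h := integral_unitCube_truncPow n 0 t
    simp only [truncPow, add_zero, zero_add, pow_one, Nat.factorial_one, Nat.cast_one,
      div_one] at h
    rw [h, sum_div]
    refine sum_congr rfl fun k _ => ?_
    rw [max_zero_pow_eq_mul_ite n.add_one_ne_zero]
    ring
  rw [truncMoment, setIntegral_truncCube_sum, hcube]
  field_simp

theorem truncCube_moment_formula (n : ℕ) (hn : 0 < n) (t : ℝ)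
    (ht : t ∈ Set.Ioc (0 : ℝ) n) :
    truncMoment n t =
      (1 / (n : ℝ)) *
        (t - (∑ k ∈ Finset.range (n + 1),
            (n.choose k : ℝ) * (-1) ^ k * (t - k) ^ (n + 1) *
              (if 0 ≤ t - (k : ℝ) then 1 else 0)) /
          (truncVol n t * ((n + 1).factorial : ℝ))) :=
  truncCube_moment_formula_general n t ht
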